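/- Let K be a compact linearly ordered topological space and let G : K → ℝ be right-continuous and of bounded variation. Set G_1 = T_G (the variation function T_G(x) = |G(0_K)| + Var(G|_{[0_K,x]})) and G_2 = T_G − G. Then G_1 and G_2 are both nondecreasing right-continuous functions and G = G_1 − G_2. -/

import Mathlib

/-!
The division sums over `[⊥, x]` have the same supremum as the sums defining `eVariationOn G
(Icc ⊥ x)` (pad a division with `⊥` and `x`, or extend it constantly), so
`T = |G ⊥| + variationOnFromTo G univ ⊥`. Additivity of the variation over adjacent intervals and
`|G b - G a| ≤ Var(G|[a, b])` make `T` and `T - G` monotone; right-continuity of `G` at `x` makes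
the variation over `[x, y]` tend to `0` as `y ↓ x`, which is right-continuity of `T`.
-/

/-- The set of division sums of `G` over `[⊥, x]`. -/
def divisionSums {K : Type*} [LinearOrder K] [OrderBot K] (G : K → ℝ) (x : K) :
    Set ℝ :=
  {v | ∃ (n : ℕ) (s : Fin (n + 1) → K), Monotone s ∧ s 0 = ⊥ ∧
    s (Fin.last n) = x ∧ v = ∑ i : Fin n, |G (s i.succ) - G (s i.castSucc)|}

open Set Filter Topology Finset

theorem LocallyBoundedVariationOn.continuousWithinAt_variationOnFromTo_Ici
    {α E : Type*} [LinearOrder α] [TopologicalSpace α] [OrderTopology α] [PseudoEMetricSpace E]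
    {f : α → E} (hf : LocallyBoundedVariationOn f univ) {a x : α}
    (hx : ContinuousWithinAt f (Ici x) x) :
    ContinuousWithinAt (variationOnFromTo f univ a) (Ici x) x := by
  have hsplit : variationOnFromTo f univ a =
      fun y ↦ variationOnFromTo f univ a x + variationOnFromTo f univ x y := by
    ext y
    rw [variationOnFromTo.add hf (mem_univ _) (mem_univ _) (mem_univ _)]
  rw [hsplit, ← continuousWithinAt_Ioi_iff_Ici]
  refine continuousWithinAt_const.add ?_
  have hfx : Tendsto f (𝓝[univ ∩ Ioi x] x) (𝓝 (f x)) := by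
    rw [univ_inter]
    exact continuousWithinAt_Ioi_iff_Ici.2 hx
  have hvar : Tendsto (fun y ↦ eVariationOn f (univ ∩ Icc x y)) (𝓝[>] x) (𝓝 0) := by
    simpa using hf.tendsto_eVariationOn_Icc_right hfx (mem_univ x)
  have hvar' := (ENNReal.tendsto_toReal ENNReal.zero_ne_top).comp hvar
  rw [ENNReal.toReal_zero, ← variationOnFromTo.self f univ x] at hvar'
  refine hvar'.congr' ?_
  filter_upwards [self_mem_nhdsWithin] with y hy
  exact (variationOnFromTo.eq_of_le f univ (le_of_lt hy)).symm

lemma sum_range_edist_eq_ofReal {α : Type*} (G : α → ℝ) (u : ℕ → α) (n : ℕ) :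
    ∑ i ∈ range n, edist (G (u (i + 1))) (G (u i)) =
      ENNReal.ofReal (∑ i ∈ range n, |G (u (i + 1)) - G (u i)|) := by
  rw [ENNReal.ofReal_sum_of_nonneg fun i _ ↦ abs_nonneg _]
  simp only [edist_dist, Real.dist_eq]

section divisionSums

variable {K : Type*} [LinearOrder K] [OrderBot K] {G : K → ℝ} {x : K}

lemma sum_range_mem_divisionSums {u : ℕ → K} (hu : Monotone u) (h0 : u 0 = ⊥) {n : ℕ}
    (hn : u n = x) : ∑ i ∈ range n, |G (u (i + 1)) - G (u i)| ∈ divisionSums G x :=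
  ⟨n, fun i ↦ u i, fun _ _ hij ↦ hu hij, h0, hn,
    (Fin.sum_univ_eq_sum_range (fun i ↦ |G (u (i + 1)) - G (u i)|) n).symm⟩

lemma abs_sub_bot_mem_divisionSums (G : K → ℝ) (x : K) : |G x - G ⊥| ∈ divisionSums G x := by
  have hu : Monotone fun i : ℕ ↦ if i = 0 then ⊥ else x := by
    intro i j hij
    dsimp only
    split_ifs <;> first | exact bot_le | exact le_rfl | omega
  simpa using sum_range_mem_divisionSums (G := G) hu rfl (n := 1) rfl

lemma exists_monotone_of_mem_divisionSums {v : ℝ} (hv : v ∈ divisionSums G x) :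
    ∃ (n : ℕ) (u : ℕ → K), Monotone u ∧ (∀ i, u i ∈ Icc ⊥ x) ∧
      v = ∑ i ∈ range n, |G (u (i + 1)) - G (u i)| := by
  obtain ⟨n, s, hs, -, hsx, rfl⟩ := hv
  refine ⟨n, fun i ↦ s (Fin.clamp i n), fun i j hij ↦ hs ?_,
    fun i ↦ ⟨bot_le, hsx ▸ hs (Fin.le_last _)⟩, ?_⟩
  · simp only [Fin.clamp, Fin.mk_le_mk]
    omega
  rw [← Fin.sum_univ_eq_sum_range (fun i ↦ |G (s (Fin.clamp (i + 1) n)) - G (s (Fin.clamp i n))|)]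
  refine Fintype.sum_congr _ _ fun i ↦ ?_
  congr 4 <;> ext <;> simp [Fin.clamp]

lemma ofReal_le_eVariationOn_of_mem_divisionSums {v : ℝ} (hv : v ∈ divisionSums G x) :
    ENNReal.ofReal v ≤ eVariationOn G (Icc ⊥ x) := by
  obtain ⟨n, u, hu, hux, rfl⟩ := exists_monotone_of_mem_divisionSums hv
  rw [← sum_range_edist_eq_ofReal]
  exact eVariationOn.sum_le hu hux

lemma eVariationOn_le_ofReal_of_mem_upperBounds {m : ℝ} (hm : m ∈ upperBounds (divisionSums G x)) :
    eVariationOn G (Icc ⊥ x) ≤ ENNReal.ofReal m := by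
  refine iSup_le fun ⟨n, u, hu, hux⟩ ↦ ?_
  -- `⊥, u 0, …, u n, x` is a division of `[⊥, x]`
  set w : ℕ → K := fun j ↦ if j = 0 then ⊥ else if j ≤ n + 1 then u (j - 1) else x with hw_def
  have hwu : ∀ i ≤ n, w (i + 1) = u i := fun i hi ↦ by simp [hw_def, hi]
  have hw : Monotone w := by
    intro i j hij
    simp only [hw_def]
    split_ifs <;>
      first | exact bot_le | exact le_rfl | exact hu (by omega) | exact (hux _).2 | omega
  calc ∑ i ∈ range n, edist (G (u (i + 1))) (G (u i))
      = ENNReal.ofReal (∑ i ∈ range n, |G (w (i + 1 + 1)) - G (w (i + 1))|) := by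
        rw [sum_range_edist_eq_ofReal]
        congr 1
        refine sum_congr rfl fun i hi ↦ ?_
        have hi : i < n := mem_range.1 hi
        rw [hwu i hi.le, hwu (i + 1) hi]
    _ ≤ ENNReal.ofReal (∑ i ∈ range (n + 2), |G (w (i + 1)) - G (w i)|) := by
        gcongr
        rw [sum_range_succ, sum_range_succ']
        linarith [abs_nonneg (G (w (n + 1 + 1)) - G (w (n + 1))), abs_nonneg (G (w 1) - G (w 0))]
    _ ≤ ENNReal.ofReal m :=
        ENNReal.ofReal_le_ofReal (hm (sum_range_mem_divisionSums hw rfl (by simp [w])))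

lemma eVariationOn_Icc_bot_ne_top (h : BddAbove (divisionSums G x)) :
    eVariationOn G (Icc ⊥ x) ≠ ⊤ :=
  ne_top_of_le_ne_top ENNReal.ofReal_ne_top
    (eVariationOn_le_ofReal_of_mem_upperBounds h.choose_spec)

lemma isLUB_divisionSums (h : BddAbove (divisionSums G x)) :
    IsLUB (divisionSums G x) (eVariationOn G (Icc ⊥ x)).toReal := by
  refine ⟨fun v hv ↦ ?_, fun m hm ↦ ?_⟩
  · exact (ENNReal.ofReal_le_iff_le_toReal (eVariationOn_Icc_bot_ne_top h)).1
      (ofReal_le_eVariationOn_of_mem_divisionSums hv)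
  · exact ENNReal.toReal_le_of_le_ofReal
      ((abs_nonneg _).trans (hm (abs_sub_bot_mem_divisionSums G x)))
      (eVariationOn_le_ofReal_of_mem_upperBounds hm)

lemma locallyBoundedVariationOn_univ_of_bddAbove (h : ∀ x, BddAbove (divisionSums G x)) :
    LocallyBoundedVariationOn G univ := fun _ b _ _ ↦
  ne_top_of_le_ne_top (eVariationOn_Icc_bot_ne_top (h b))
    (eVariationOn.mono G fun _ hy ↦ ⟨bot_le, hy.2.2⟩)

end divisionSums

theorem stmt10_general {K : Type*} [LinearOrder K] [TopologicalSpace K] [OrderTopology K]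
    [OrderBot K]
    (G : K → ℝ)
    (hG_rc : ∀ x : K, ContinuousWithinAt G (Set.Ici x) x)
    (T : K → ℝ)
    (hT : ∀ x : K, IsLUB (divisionSums G x) (T x - |G ⊥|)) :
    Monotone T ∧ (∀ x : K, ContinuousWithinAt T (Set.Ici x) x) ∧
    Monotone (fun x => T x - G x) ∧
    (∀ x : K, ContinuousWithinAt (fun x => T x - G x) (Set.Ici x) x) ∧
    (∀ x : K, G x = T x - (T x - G x)) := by
  have hbdd : ∀ x, BddAbove (divisionSums G x) := fun x ↦ ⟨_, (hT x).1⟩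
  have hG := locallyBoundedVariationOn_univ_of_bddAbove hbdd
  obtain rfl : T = fun x ↦ |G ⊥| + variationOnFromTo G univ ⊥ x := by
    funext x
    rw [variationOnFromTo.eq_of_le _ _ bot_le, univ_inter,
      ← (hT x).unique (isLUB_divisionSums (hbdd x))]
    ring
  have hTrc : ∀ x, ContinuousWithinAt (fun x ↦ |G ⊥| + variationOnFromTo G univ ⊥ x) (Ici x) x :=
    fun x ↦ continuousWithinAt_const.add (hG.continuousWithinAt_variationOnFromTo_Ici (hG_rc x))
  refine ⟨fun a b hab ↦ ?_, hTrc, fun a b hab ↦ ?_, fun x ↦ (hTrc x).sub (hG_rc x),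
    fun x ↦ by ring⟩
  · simpa using variationOnFromTo.monotoneOn hG (mem_univ ⊥) (mem_univ a) (mem_univ b) hab
  · simpa [add_sub_assoc] using
      variationOnFromTo.sub_self_monotoneOn hG (mem_univ ⊥) (mem_univ a) (mem_univ b) hab

/-- Jordan decomposition on a compact line: if `G : K → ℝ` is right-continuous
and of bounded variation with variation function `T`, then `G₁ = T` and
`G₂ = T − G` are nondecreasing right-continuous functions with `G = G₁ − G₂`. -/
theorem stmt10 {K : Type*} [LinearOrder K] [TopologicalSpace K] [OrderTopology K]
    [CompactSpace K] [Nonempty K] [OrderBot K] [OrderTop K]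
    (G : K → ℝ)
    (hG_rc : ∀ x : K, ContinuousWithinAt G (Set.Ici x) x)
    (hBV : BddAbove (divisionSums G ⊤))
    (T : K → ℝ)
    (hT : ∀ x : K, IsLUB (divisionSums G x) (T x - |G ⊥|)) :
    Monotone T ∧ (∀ x : K, ContinuousWithinAt T (Set.Ici x) x) ∧
    Monotone (fun x => T x - G x) ∧
    (∀ x : K, ContinuousWithinAt (fun x => T x - G x) (Set.Ici x) x) ∧
    (∀ x : K, G x = T x - (T x - G x)) :=
  stmt10_general G hG_rc T hT
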